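/- arXiv:2506.14930 — 5 statements merged into one kernel-verified Lean document; each statement's English description precedes it below -/
import Mathlib

section
/- Let B : V → V* be a skew-symmetric linear map on a finite-dimensional real vector space V (i.e., (Bx)(y) = -(By)(x)), and let ξ ∈ V* be nonzero. Then ξ ∈ image(B) if and only if B(ker ξ) ⊊ image(B). Moreover, if ξ ∈ image(B), then there exists X ∈ ker ξ with B(X) = ξ. -/
open Module

/-- for a skew-symmetric map `B : V → V*` and `ξ ≠ 0`,
`ξ ∈ image B ⟺ B(ker ξ) ⊊ image B`, and if `ξ ∈ image B` then some `X ∈ ker ξ`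
satisfies `B X = ξ`. -/
theorem skew_image_criterion (V : Type*) [AddCommGroup V] [Module ℝ V]
    [FiniteDimensional ℝ V] (B : V →ₗ[ℝ] Module.Dual ℝ V)
    (hB : ∀ x y : V, B x y = -(B y x)) (ξ : Module.Dual ℝ V) (hξ : ξ ≠ 0) :
    (ξ ∈ LinearMap.range B ↔ Submodule.map B (LinearMap.ker ξ) < LinearMap.range B) ∧
      (ξ ∈ LinearMap.range B → ∃ X ∈ LinearMap.ker ξ, B X = ξ) := by
  have hBxx : ∀ x : V, B x x = 0 := fun x => by have := hB x x; linarith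
  have hpart2 : ξ ∈ LinearMap.range B → ∃ X ∈ LinearMap.ker ξ, B X = ξ := by
    rintro ⟨x, rfl⟩
    exact ⟨x, by simp [LinearMap.mem_ker, hBxx x], rfl⟩
  have hker : ∀ z ∈ LinearMap.ker B, ∀ η ∈ LinearMap.range B, η z = 0 := by
    rintro z hz η ⟨x, rfl⟩
    rw [hB x z, LinearMap.mem_ker.mp hz]
    simp
  have hrange : LinearMap.range B = (LinearMap.ker B).dualAnnihilator := by
    apply Submodule.eq_of_le_of_finrank_le
    · intro η hη
      rw [Submodule.mem_dualAnnihilator]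
      intro w hw
      exact hker w hw η hη
    · have h1 : finrank ℝ (V ⧸ LinearMap.ker B) = finrank ℝ (LinearMap.ker B).dualAnnihilator :=
        (Subspace.quotEquivAnnihilator (LinearMap.ker B)).finrank_eq
      have h2 := LinearMap.finrank_range_add_finrank_ker B
      have h3 := Submodule.finrank_quotient_add_finrank (LinearMap.ker B)
      omega
  have hle : Submodule.map B (LinearMap.ker ξ) ≤ LinearMap.range B := by
    rintro _ ⟨x, _, rfl⟩
    exact ⟨x, rfl⟩
  have fwd : ξ ∈ LinearMap.range B →
      Submodule.map B (LinearMap.ker ξ) < LinearMap.range B := by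
    intro hmem
    refine lt_of_le_of_ne hle ?_
    intro heq
    apply hξ
    ext y
    have hy : B y ∈ Submodule.map B (LinearMap.ker ξ) := heq ▸ ⟨y, rfl⟩
    obtain ⟨x, hxK, hxy⟩ := hy
    have hzker : y - x ∈ LinearMap.ker B := by
      rw [LinearMap.mem_ker, map_sub, hxy, sub_self]
    have h1 : ξ (y - x) = 0 := hker _ hzker ξ hmem
    have h2 : ξ x = 0 := LinearMap.mem_ker.mp hxK
    have : ξ y = ξ (y - x) + ξ x := by rw [map_sub]; ring
    simp [this, h1, h2]
  have rev : Submodule.map B (LinearMap.ker ξ) < LinearMap.range B →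
      ξ ∈ LinearMap.range B := by
    intro hlt
    by_contra hnot
    apply hlt.ne
    apply le_antisymm hle
    rintro _ ⟨y, rfl⟩
    have hz : ∃ z, B z = 0 ∧ ξ z ≠ 0 := by
      by_contra hc
      push_neg at hc
      apply hnot
      rw [hrange, Submodule.mem_dualAnnihilator]
      intro w hw
      exact hc w (LinearMap.mem_ker.mp hw)
    obtain ⟨z, hz0, hzξ⟩ := hz
    refine ⟨y - (ξ y / ξ z) • z, ?_, ?_⟩
    · show _ ∈ LinearMap.ker ξ
      rw [LinearMap.mem_ker, map_sub, map_smul, smul_eq_mul]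
      rw [div_mul_cancel₀ _ hzξ, sub_self]
    · rw [map_sub, map_smul, hz0, smul_zero, sub_zero]
  exact ⟨⟨fwd, rev⟩, hpart2⟩
end

section
/- For the Lie algebra sl₂(ℝ), the element ξ ∈ sl₂(ℝ)* satisfies ξ ∧ dξ = (-ξ(e₁)² - ξ(e₂)² + ξ(e₃)²)·(e₁*∧e₂*∧e₃*) in a suitable basis, and hence sl₂(ℝ) is not of constant height: there exist nonzero elements of sl₂(ℝ)* of height 0 and nonzero elements of height 1. -/
open ExteriorAlgebra Module

/-- The Chevalley–Eilenberg differential of a 1-form, as an element of `∧² g*`. -/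
noncomputable def ceD (L : Type*) [LieRing L] [LieAlgebra ℝ L] [Module.Finite ℝ L]
    (ξ : Module.Dual ℝ L) : ExteriorAlgebra ℝ (Module.Dual ℝ L) :=
  let b := Module.Free.chooseBasis ℝ L
  (-(1 : ℝ)/2) • ∑ i, ∑ j, ξ ⁅b i, b j⁆ •
    (ExteriorAlgebra.ι ℝ (b.coord i) * ExteriorAlgebra.ι ℝ (b.coord j))

/-- The Chevalley–Eilenberg differential of `ξ` as a bilinear form:
`(d_g ξ)(X,Y) = -ξ([X,Y])`.  Note that `dForm L ξ Y = ad*_Y ξ` is also the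
coadjoint action, `(ad*_Y ξ)(X) = -ξ([Y,X])`. -/
noncomputable def dForm (L : Type*) [LieRing L] [LieAlgebra ℝ L]
    (ξ : Module.Dual ℝ L) : L →ₗ[ℝ] L →ₗ[ℝ] ℝ :=
  LinearMap.mk₂ ℝ (fun X Y => -ξ ⁅X, Y⁆)
    (fun X X' Y => by simp [add_lie]; ring)
    (fun c X Y => by simp [smul_lie])
    (fun X Y Y' => by simp [lie_add]; ring)
    (fun c X Y => by simp [lie_smul])

set_option synthInstance.maxHeartbeats 1000000
set_option maxHeartbeats 1000000

section Aux

/-- Expansion of a dual vector in the dual basis. -/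
lemma coord_expand {L : Type*} [AddCommGroup L] [Module ℝ L]
    {I : Type*} [Fintype I] (b : Basis I ℝ L) (f : Module.Dual ℝ L) :
    f = ∑ k, f (b k) • (b.coord k : Module.Dual ℝ L) := by
  classical
  refine b.ext fun m => ?_
  simp [Basis.coord_apply, Basis.repr_self, Finsupp.single_apply]

lemma sum4_comm {α β M : Type*} [Fintype α] [Fintype β] [AddCommMonoid M]
    (t : α → α → β → β → M) :
    ∑ i, ∑ j, ∑ k, ∑ l, t i j k l = ∑ k, ∑ l, ∑ i, ∑ j, t i j k l := by
  calc ∑ i, ∑ j, ∑ k, ∑ l, t i j k l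
      = ∑ i, ∑ k, ∑ j, ∑ l, t i j k l :=
        Finset.sum_congr rfl fun i _ => Finset.sum_comm
    _ = ∑ k, ∑ i, ∑ j, ∑ l, t i j k l := Finset.sum_comm
    _ = ∑ k, ∑ i, ∑ l, ∑ j, t i j k l :=
        Finset.sum_congr rfl fun k _ => Finset.sum_congr rfl fun i _ => Finset.sum_comm
    _ = ∑ k, ∑ l, ∑ i, ∑ j, t i j k l :=
        Finset.sum_congr rfl fun k _ => Finset.sum_comm

/-- The element `∑ᵢⱼ B(bᵢ,bⱼ) bᵢ* ∧ bⱼ*` of the exterior algebra does not depend on the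
choice of basis. -/
lemma bilin_basis_change {L : Type*} [AddCommGroup L] [Module ℝ L]
    {I K : Type*} [Fintype I] [Fintype K]
    (b : Basis I ℝ L) (c : Basis K ℝ L) (B : L →ₗ[ℝ] L →ₗ[ℝ] ℝ) :
    ∑ i, ∑ j, B (c i) (c j) • (ι ℝ (c.coord i : Module.Dual ℝ L) * ι ℝ (c.coord j)) =
    ∑ k, ∑ l, B (b k) (b l) • (ι ℝ (b.coord k : Module.Dual ℝ L) * ι ℝ (b.coord l)) := by
  have hB : ∀ k l : I, B (b k) (b l)
      = ∑ i, ∑ j, B (c i) (c j) * (c.coord i (b k) * c.coord j (b l)) := by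
    intro k l
    conv_lhs => rw [← c.sum_repr (b k), ← c.sum_repr (b l)]
    simp [map_sum, LinearMap.sum_apply, Finset.mul_sum, Basis.coord_apply, -Basis.sum_repr]
    rw [Finset.sum_comm]
    exact Finset.sum_congr rfl fun i _ => Finset.sum_congr rfl fun j _ => by ring
  have hι : ∀ i : K, (ι ℝ (c.coord i : Module.Dual ℝ L))
      = ∑ k, c.coord i (b k) • ι ℝ (b.coord k : Module.Dual ℝ L) := by
    intro i
    conv_lhs => rw [coord_expand b (c.coord i)]
    simp [map_sum]
  calc ∑ i, ∑ j, B (c i) (c j) • (ι ℝ (c.coord i : Module.Dual ℝ L) * ι ℝ (c.coord j))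
      = ∑ i, ∑ j, ∑ k, ∑ l, (B (c i) (c j) * (c.coord i (b k) * c.coord j (b l))) •
          (ι ℝ (b.coord k : Module.Dual ℝ L) * ι ℝ (b.coord l)) := by
        refine Finset.sum_congr rfl fun i _ => Finset.sum_congr rfl fun j _ => ?_
        rw [hι i, hι j, Finset.sum_mul_sum]
        simp only [Finset.smul_sum, smul_mul_assoc, mul_smul_comm, smul_smul]
        exact Finset.sum_congr rfl fun k _ => Finset.sum_congr rfl fun l _ => by
          rw [mul_comm (c.coord j (b l)) (c.coord i (b k))]
    _ = ∑ k, ∑ l, ∑ i, ∑ j, (B (c i) (c j) * (c.coord i (b k) * c.coord j (b l))) •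
          (ι ℝ (b.coord k : Module.Dual ℝ L) * ι ℝ (b.coord l)) := sum4_comm _
    _ = ∑ k, ∑ l, B (b k) (b l) • (ι ℝ (b.coord k : Module.Dual ℝ L) * ι ℝ (b.coord l)) := by
        refine Finset.sum_congr rfl fun k _ => Finset.sum_congr rfl fun l _ => ?_
        rw [hB k l, Finset.sum_smul]
        exact Finset.sum_congr rfl fun i _ => (Finset.sum_smul).symm

/-- The bracket bilinear form `(X,Y) ↦ ξ([X,Y])`. -/
noncomputable def lieB (L : Type*) [LieRing L] [LieAlgebra ℝ L]
    (ξ : Module.Dual ℝ L) : L →ₗ[ℝ] L →ₗ[ℝ] ℝ :=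
  LinearMap.mk₂ ℝ (fun X Y => ξ ⁅X, Y⁆)
    (fun X X' Y => by simp [add_lie])
    (fun c X Y => by simp [smul_lie])
    (fun X Y Y' => by simp [lie_add])
    (fun c X Y => by simp [lie_smul])

/-- `ceD` can be computed using any basis. -/
lemma ceD_eq (L : Type*) [LieRing L] [LieAlgebra ℝ L] [Module.Finite ℝ L]
    {I : Type*} [Fintype I] (b : Basis I ℝ L) (ξ : Module.Dual ℝ L) :
    ceD L ξ = (-(1:ℝ)/2) • ∑ i, ∑ j, ξ ⁅b i, b j⁆ •
      (ι ℝ (b.coord i : Module.Dual ℝ L) * ι ℝ (b.coord j)) := by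
  show (-(1 : ℝ)/2) • ∑ i, ∑ j, ξ ⁅Module.Free.chooseBasis ℝ L i, Module.Free.chooseBasis ℝ L j⁆ •
      (ι ℝ ((Module.Free.chooseBasis ℝ L).coord i) *
        ι ℝ ((Module.Free.chooseBasis ℝ L).coord j)) = _
  congr 1
  exact bilin_basis_change b (Module.Free.chooseBasis ℝ L) (lieB L ξ)

variable {L : Type*} [AddCommGroup L] [Module ℝ L]

lemma swap_mul (f g : Module.Dual ℝ L) :
    ι ℝ g * ι ℝ f = -((ι ℝ f : ExteriorAlgebra ℝ (Module.Dual ℝ L)) * ι ℝ g) :=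
  eq_neg_of_add_eq_zero_left (ι_add_mul_swap g f)

variable (f0 f1 f2 : Module.Dual ℝ L)

lemma p00 : ι ℝ f0 * ((ι ℝ f0 : ExteriorAlgebra ℝ (Module.Dual ℝ L)) * ι ℝ f1) = 0 := by
  rw [← mul_assoc, ι_sq_zero, zero_mul]

lemma p10 : ι ℝ f1 * ((ι ℝ f0 : ExteriorAlgebra ℝ (Module.Dual ℝ L)) * ι ℝ f1) = 0 := by
  rw [← mul_assoc, swap_mul, neg_mul, mul_assoc, ι_sq_zero, mul_zero, neg_zero]

lemma p11 : ι ℝ f1 * ((ι ℝ f0 : ExteriorAlgebra ℝ (Module.Dual ℝ L)) * ι ℝ f2)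
    = -(ι ℝ f0 * ι ℝ f1 * ι ℝ f2) := by
  rw [← mul_assoc, swap_mul, neg_mul]

lemma p20 : ι ℝ f2 * ((ι ℝ f0 : ExteriorAlgebra ℝ (Module.Dual ℝ L)) * ι ℝ f1)
    = ι ℝ f0 * ι ℝ f1 * ι ℝ f2 := by
  rw [← mul_assoc, swap_mul, neg_mul, mul_assoc, swap_mul f1 f2, mul_neg, neg_neg, ← mul_assoc]

/-- The wedge of the three dual basis vectors is nonzero. -/
lemma triple_ne_zero (b : Basis (Fin 3) ℝ L) :
    (ι ℝ (b.coord 0 : Module.Dual ℝ L) * ι ℝ (b.coord 1) * ι ℝ (b.coord 2)) ≠ 0 := by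
  classical
  set v : Fin 3 → Module.Dual ℝ L := ![b.coord 0, b.coord 1, b.coord 2] with hv
  have hvb : v = ⇑b.dualBasis := by
    funext i
    fin_cases i <;> simp [hv, Basis.coe_dualBasis]
  have hmulti : ιMulti ℝ 3 v = ι ℝ (b.coord 0 : Module.Dual ℝ L) * ι ℝ (b.coord 1) *
      ι ℝ (b.coord 2) := by
    rw [ιMulti_apply]
    simp [hv, List.ofFn_succ, mul_assoc]
  set f : ∀ i : ℕ, Module.Dual ℝ L [⋀^Fin i]→ₗ[ℝ] ℝ := fun i =>
    match i with
    | 3 => b.dualBasis.det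
    | _ => 0
    with hf
  intro h
  have h2 := congrArg (liftAlternating (R := ℝ) f) h
  rw [← hmulti, liftAlternating_apply_ιMulti, map_zero] at h2
  have h3 : f 3 v = 1 := by
    rw [hvb]
    exact b.dualBasis.det_self
  rw [h3] at h2
  exact one_ne_zero h2

end Aux

set_option synthInstance.maxHeartbeats 1000000 in
/-- for `sl₂(ℝ)`, formalised as a real Lie algebra with a (suitable) basis
`e₁,e₂,e₃` satisfying `[e₂,e₃]=e₁`, `[e₃,e₁]=e₂`, `[e₁,e₂]=-e₃`, one has
`ξ ∧ dξ = (-ξ(e₁)² - ξ(e₂)² + ξ(e₃)²) · e₁* ∧ e₂* ∧ e₃*`; consequently `sl₂(ℝ)` is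
not of constant height: there are nonzero elements of height 0 and of height 1. -/
theorem sl2_not_constant_height (L : Type*) [LieRing L] [LieAlgebra ℝ L]
    [Module.Finite ℝ L] (b : Basis (Fin 3) ℝ L)
    (h23 : ⁅b 1, b 2⁆ = b 0) (h31 : ⁅b 2, b 0⁆ = b 1) (h12 : ⁅b 0, b 1⁆ = -b 2) :
    (∀ ξ : Module.Dual ℝ L, ι ℝ ξ * ceD L ξ =
        (-(ξ (b 0)) ^ 2 - (ξ (b 1)) ^ 2 + (ξ (b 2)) ^ 2) •
          (ι ℝ (b.coord 0 : Module.Dual ℝ L) * ι ℝ (b.coord 1 : Module.Dual ℝ L) *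
            ι ℝ (b.coord 2 : Module.Dual ℝ L))) ∧
      (∃ ξ : Module.Dual ℝ L, ξ ≠ 0 ∧
        ι ℝ ξ * (ceD L ξ) ^ 0 ≠ 0 ∧ ι ℝ ξ * (ceD L ξ) ^ 1 = 0) ∧
      (∃ ξ : Module.Dual ℝ L, ξ ≠ 0 ∧
        ι ℝ ξ * (ceD L ξ) ^ 1 ≠ 0 ∧ ι ℝ ξ * (ceD L ξ) ^ 2 = 0) := by
  classical
  set E0 := ι ℝ (b.coord 0 : Module.Dual ℝ L) with hE0
  set E1 := ι ℝ (b.coord 1 : Module.Dual ℝ L) with hE1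
  set E2 := ι ℝ (b.coord 2 : Module.Dual ℝ L) with hE2
  -- closed form for the CE differential
  have h32 : ⁅b 2, b 1⁆ = -(b 0) := by rw [← h23, ← lie_skew]
  have h13 : ⁅b 0, b 2⁆ = -(b 1) := by rw [← h31, ← lie_skew]
  have h21 : ⁅b 1, b 0⁆ = b 2 := by rw [← lie_skew, h12, neg_neg]
  have hswap : ∀ f g : Module.Dual ℝ L, ι ℝ g * ι ℝ f = -(ι ℝ f * ι ℝ g) := fun f g =>
    eq_neg_of_add_eq_zero_left (ι_add_mul_swap g f)
  have hceD : ∀ ξ : Module.Dual ℝ L,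
      ceD L ξ = ξ (b 2) • (E0 * E1) + ξ (b 1) • (E0 * E2) - ξ (b 0) • (E1 * E2) := by
    intro ξ
    rw [ceD_eq L b ξ]
    simp only [Fin.sum_univ_three, h23, h31, h12, h32, h13, h21, lie_self, map_zero, map_neg,
      zero_smul, neg_smul, add_zero, zero_add,
      hswap (b.coord 0) (b.coord 1), hswap (b.coord 0) (b.coord 2),
      hswap (b.coord 1) (b.coord 2), ← hE0, ← hE1, ← hE2]
    rw [show E1 * E0 = -(E0 * E1) from hswap _ _, show E2 * E0 = -(E0 * E2) from hswap _ _,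
      show E2 * E1 = -(E1 * E2) from hswap _ _]
    module
  -- the nine products
  have w00 : E0 * (E0 * E1) = 0 := p00 _ _
  have w01 : E0 * (E0 * E2) = 0 := p00 _ _
  have w02 : E0 * (E1 * E2) = E0 * E1 * E2 := (mul_assoc _ _ _).symm
  have w10 : E1 * (E0 * E1) = 0 := p10 _ _
  have w11 : E1 * (E0 * E2) = -(E0 * E1 * E2) := p11 _ _ _
  have w12 : E1 * (E1 * E2) = 0 := p00 _ _
  have w20 : E2 * (E0 * E1) = E0 * E1 * E2 := p20 _ _ _
  have w21 : E2 * (E0 * E2) = 0 := p10 _ _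
  have w22 : E2 * (E1 * E2) = 0 := p10 _ _
  -- the main formula
  have key : ∀ ξ : Module.Dual ℝ L, ι ℝ ξ * ceD L ξ =
      (-(ξ (b 0)) ^ 2 - (ξ (b 1)) ^ 2 + (ξ (b 2)) ^ 2) • (E0 * E1 * E2) := by
    intro ξ
    have hξ : ι ℝ ξ = ξ (b 0) • E0 + ξ (b 1) • E1 + ξ (b 2) • E2 := by
      have h := coord_expand b ξ
      rw [Fin.sum_univ_three] at h
      conv_lhs => rw [h]
      rw [map_add, map_add, map_smul, map_smul, map_smul]
    rw [hξ, hceD]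
    simp only [mul_add, add_mul, mul_sub, sub_mul, smul_mul_assoc, mul_smul_comm, smul_smul,
      w00, w01, w02, w10, w11, w12, w20, w21, w22]
    match_scalars <;> ring
  -- values of the coordinate functions
  have hco : ∀ i j : Fin 3, (b.coord i : Module.Dual ℝ L) (b j) = if i = j then 1 else 0 := by
    intro i j
    simp [Basis.coord_apply, Basis.repr_self, Finsupp.single_apply, eq_comm]
  refine ⟨key, ?_, ?_⟩
  · -- height 0: ξ = e₁* + e₃*
    refine ⟨(b.coord 0 : Module.Dual ℝ L) + b.coord 2, ?_, ?_, ?_⟩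
    · intro h
      have := DFunLike.congr_fun h (b 0)
      simp [hco] at this
    · rw [pow_zero, mul_one, ne_eq, ι_eq_zero_iff]
      intro h
      have := DFunLike.congr_fun h (b 0)
      simp [hco] at this
    · rw [pow_one, key]
      simp [hco]
  · -- height 1: ξ = e₃*
    refine ⟨(b.coord 2 : Module.Dual ℝ L), ?_, ?_, ?_⟩
    · intro h
      have := DFunLike.congr_fun h (b 2)
      simp [hco] at this
    · rw [pow_one, key]
      have h1 : (-(((b.coord 2 : Module.Dual ℝ L)) (b 0)) ^ 2
          - ((b.coord 2 : Module.Dual ℝ L) (b 1)) ^ 2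
          + ((b.coord 2 : Module.Dual ℝ L) (b 2)) ^ 2) = 1 := by simp [hco]
      rw [h1, one_smul]
      exact triple_ne_zero b
    · have hc : ceD L (b.coord 2 : Module.Dual ℝ L) = E0 * E1 := by
        rw [hceD]
        simp [hco]
      rw [hc, pow_two, mul_assoc, w10, mul_zero, mul_zero]
end

section
/- Let g be a finite-dimensional real Lie algebra of constant height k and h ⊊ g a proper ideal. Then h is abelian. -/
open ExteriorAlgebra Module

set_option synthInstance.maxHeartbeats 1000000
set_option maxHeartbeats 4000000
set_option linter.unusedSectionVars false

section Aux

variable {L : Type*} [LieRing L] [LieAlgebra ℝ L] [Module.Finite ℝ L]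

local notation "𝔅" => Module.Free.chooseBasis ℝ L

lemma dForm_apply (ξ : Module.Dual ℝ L) (X Y : L) : dForm L ξ X Y = -ξ ⁅X, Y⁆ := rfl

/-- Contraction (interior product) of the exterior algebra of `g*` with `X ∈ g`. -/
noncomputable def DX (X : L) :
    ExteriorAlgebra ℝ (Module.Dual ℝ L) →ₗ[ℝ] ExteriorAlgebra ℝ (Module.Dual ℝ L) :=
  CliffordAlgebra.contractLeft (Module.Dual.eval ℝ L X)

lemma DX_ι (X : L) (f : Module.Dual ℝ L) :
    DX X (ι ℝ f) = algebraMap ℝ _ (f X) := by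
  rw [DX, CliffordAlgebra.contractLeft_ι]; rfl

lemma DX_ι_mul (X : L) (f : Module.Dual ℝ L) (y) :
    DX X (ι ℝ f * y) = f X • y - ι ℝ f * DX X y := by
  rw [DX, CliffordAlgebra.contractLeft_ι_mul]; rfl

lemma DX_one (X : L) : DX X 1 = 0 := CliffordAlgebra.contractLeft_one _ _

lemma DX_algebraMap (X : L) (r : ℝ) : DX X (algebraMap ℝ _ r) = 0 :=
  CliffordAlgebra.contractLeft_algebraMap _ _ _

lemma mul_algebraMap_eq_smul (x : ExteriorAlgebra ℝ (Module.Dual ℝ L)) (r : ℝ) :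
    x * algebraMap ℝ _ r = r • x := by
  rw [Algebra.smul_def, Algebra.commutes]

lemma DX_pair (X : L) (u v : Module.Dual ℝ L) :
    DX X (ι ℝ u * ι ℝ v) = u X • ι ℝ v - v X • ι ℝ u := by
  rw [DX_ι_mul, DX_ι, mul_algebraMap_eq_smul]

lemma ceD_apply (ξ : Module.Dual ℝ L) :
    ceD L ξ = (-(1 : ℝ)/2) • ∑ i, ∑ j, ξ ⁅𝔅 i, 𝔅 j⁆ •
      (ι ℝ ((𝔅).coord i) * ι ℝ ((𝔅).coord j)) := rfl

lemma sum_coord_apply (u : L →ₗ[ℝ] ℝ) (X : L) :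
    ∑ i, (𝔅).coord i X • u (𝔅 i) = u X := by
  conv_rhs => rw [← (𝔅).sum_repr X]
  rw [map_sum]
  exact Finset.sum_congr rfl fun i _ => by rw [map_smul, Basis.coord_apply]

lemma sum_lie_coord (ξ : Module.Dual ℝ L) (X : L) (Y : L) :
    ∑ i, (𝔅).coord i X • ξ ⁅𝔅 i, Y⁆ = ξ ⁅X, Y⁆ := by
  have h := sum_coord_apply ((dForm L ξ).flip Y) X
  simp only [LinearMap.flip_apply, dForm_apply, smul_neg] at h
  rw [← neg_inj, ← Finset.sum_neg_distrib]
  exact h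

lemma lie_sum_coord (ξ : Module.Dual ℝ L) (X : L) (Y : L) :
    ∑ j, (𝔅).coord j X • ξ ⁅Y, 𝔅 j⁆ = ξ ⁅Y, X⁆ := by
  have h := sum_coord_apply (dForm L ξ Y) X
  simp only [dForm_apply, smul_neg] at h
  rw [← neg_inj, ← Finset.sum_neg_distrib]
  exact h

/-- Contraction of the CE differential: `ι_X (d ξ) = dForm ξ X`. -/
lemma DX_ceD (ξ : Module.Dual ℝ L) (X : L) :
    DX X (ceD L ξ) = ι ℝ (dForm L ξ X) := by
  have hι : ι ℝ (dForm L ξ X) = -∑ j, ξ ⁅X, 𝔅 j⁆ • ι ℝ ((𝔅).coord j) := by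
    conv_lhs => rw [← (𝔅).sum_dual_apply_smul_coord (dForm L ξ X)]
    rw [map_sum, ← Finset.sum_neg_distrib]
    exact Finset.sum_congr rfl fun j _ => by
      rw [map_smul, dForm_apply, neg_smul]
  rw [ceD_apply, map_smul, map_sum]
  simp_rw [map_sum, map_smul, DX_pair, smul_sub, smul_smul,
    mul_comm (ξ _) ((𝔅).coord _ X), ← smul_smul]
  simp only [Finset.sum_sub_distrib]
  have e1 : (∑ i, ∑ j, (𝔅).coord i X • ξ ⁅𝔅 i, 𝔅 j⁆ • ι ℝ ((𝔅).coord j))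
      = ∑ j, ξ ⁅X, 𝔅 j⁆ • ι ℝ ((𝔅).coord j) := by
    rw [Finset.sum_comm]
    refine Finset.sum_congr rfl fun j _ => ?_
    simp_rw [smul_smul]
    rw [← Finset.sum_smul]
    congr 1
    simpa [smul_eq_mul] using sum_lie_coord ξ X (𝔅 j)
  have e2 : (∑ i, ∑ j, (𝔅).coord j X • ξ ⁅𝔅 i, 𝔅 j⁆ • ι ℝ ((𝔅).coord i))
      = -∑ i, ξ ⁅X, 𝔅 i⁆ • ι ℝ ((𝔅).coord i) := by
    rw [← Finset.sum_neg_distrib]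
    refine Finset.sum_congr rfl fun i _ => ?_
    simp_rw [smul_smul]
    rw [← Finset.sum_smul]
    have := lie_sum_coord ξ X (𝔅 i)
    simp only [smul_eq_mul] at this
    rw [this, ← lie_skew, map_neg, neg_smul]
  rw [e1, e2, hι, sub_neg_eq_add, ← two_smul ℝ, smul_smul]
  norm_num

lemma ι_comm_pair (u v w : Module.Dual ℝ L) : Commute (ι ℝ u) (ι ℝ v * ι ℝ w) := by
  have sw : ∀ a b : Module.Dual ℝ L, ι ℝ a * ι ℝ b = -(ι ℝ b * ι ℝ a) := fun a b =>
    eq_neg_of_add_eq_zero_left (ι_add_mul_swap a b)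
  show _ = _
  rw [← mul_assoc, sw u v, neg_mul, mul_assoc, sw u w, mul_neg, neg_neg, ← mul_assoc]

lemma pair_comm_pair (a b u v : Module.Dual ℝ L) :
    Commute (ι ℝ a * ι ℝ b) (ι ℝ u * ι ℝ v) :=
  (ι_comm_pair a u v).mul_left (ι_comm_pair b u v)

lemma ceD_comm (ξ η : Module.Dual ℝ L) : Commute (ceD L ξ) (ceD L η) := by
  rw [ceD_apply ξ, ceD_apply η]
  refine Commute.smul_left ?_ _
  refine Commute.smul_right ?_ _
  refine Commute.sum_left _ _ _ fun i _ => ?_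
  refine Commute.sum_left _ _ _ fun j _ => ?_
  refine Commute.sum_right _ _ _ fun i' _ => ?_
  refine Commute.sum_right _ _ _ fun j' _ => ?_
  exact Commute.smul_left (Commute.smul_right (pair_comm_pair _ _ _ _) _) _

lemma ceD_smul_add (t : ℝ) (ξ η : Module.Dual ℝ L) :
    ceD L (t • ξ + η) = t • ceD L ξ + ceD L η := by
  rw [ceD_apply ξ, ceD_apply η, ceD_apply (t • ξ + η)]
  simp only [LinearMap.add_apply, LinearMap.smul_apply, smul_eq_mul, add_smul, mul_smul,
    Finset.sum_add_distrib, ← Finset.smul_sum, smul_add]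
  module

lemma ceD_mem_span (ξ : Module.Dual ℝ L) :
    ceD L ξ ∈ Submodule.span ℝ
      {z : ExteriorAlgebra ℝ (Module.Dual ℝ L) | ∃ u v : Module.Dual ℝ L, z = ι ℝ u * ι ℝ v} := by
  rw [ceD_apply]
  exact Submodule.smul_mem _ _ (Submodule.sum_mem _ fun i _ => Submodule.sum_mem _ fun j _ =>
    Submodule.smul_mem _ _ (Submodule.subset_span ⟨_, _, rfl⟩))

lemma DX_leibniz_of_mem (X : L) {a : ExteriorAlgebra ℝ (Module.Dual ℝ L)}
    (ha : a ∈ Submodule.span ℝ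
      {z : ExteriorAlgebra ℝ (Module.Dual ℝ L) | ∃ u v : Module.Dual ℝ L, z = ι ℝ u * ι ℝ v})
    (y : ExteriorAlgebra ℝ (Module.Dual ℝ L)) :
    DX X (a * y) = DX X a * y + a * DX X y := by
  induction ha using Submodule.span_induction generalizing y with
  | mem z hz =>
    obtain ⟨u, v, rfl⟩ := hz
    rw [mul_assoc, DX_ι_mul, DX_ι_mul, DX_ι_mul, DX_ι, mul_algebraMap_eq_smul]
    simp only [mul_sub, sub_mul, smul_mul_assoc, mul_smul_comm, smul_sub, mul_assoc]
    abel
  | zero => simp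
  | add x z hx hz ihx ihz => simp only [map_add, add_mul, ihx, ihz]; abel
  | smul t x hx ih => simp only [map_smul, smul_mul_assoc, ih, smul_add]

/-- Leibniz rule for contraction against the (even-degree) element `ceD ξ`. -/
lemma DX_ceD_mul (X : L) (ξ : Module.Dual ℝ L) (y : ExteriorAlgebra ℝ (Module.Dual ℝ L)) :
    DX X (ceD L ξ * y) = ι ℝ (dForm L ξ X) * y + ceD L ξ * DX X y := by
  rw [DX_leibniz_of_mem X (ceD_mem_span ξ) y, DX_ceD]

lemma DX_ceD_pow_mul (X : L) {ξ : Module.Dual ℝ L} (hξ : dForm L ξ X = 0) (m : ℕ)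
    (y : ExteriorAlgebra ℝ (Module.Dual ℝ L)) :
    DX X (ceD L ξ ^ m * y) = ceD L ξ ^ m * DX X y := by
  induction m generalizing y with
  | zero => rw [pow_zero, one_mul, one_mul]
  | succ m ih =>
    rw [pow_succ', mul_assoc, DX_ceD_mul, hξ, map_zero, zero_mul, zero_add, ih, ← mul_assoc,
      ← pow_succ']

lemma DX_ceD_pow (X : L) {ξ : Module.Dual ℝ L} (hξ : dForm L ξ X = 0) (m : ℕ) :
    DX X (ceD L ξ ^ m) = 0 := by
  rw [← mul_one (ceD L ξ ^ m), DX_ceD_pow_mul X hξ m 1, DX_one, mul_zero]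

end Aux

lemma poly_coeff_vanish {V : Type*} [AddCommGroup V] [Module ℝ V] (N : ℕ) (p q : ℕ → V)
    (h : ∀ t : ℝ, (∑ m ∈ Finset.range N, t ^ m • p m)
      + t • ∑ m ∈ Finset.range N, t ^ m • q m = 0)
    {m : ℕ} (hm : m + 1 < N) : p (m + 1) + q m = 0 := by
  rw [← Module.forall_dual_apply_eq_zero_iff ℝ]
  intro φ
  set P : Polynomial ℝ := (∑ j ∈ Finset.range N, Polynomial.C (φ (p j)) * Polynomial.X ^ j)
      + Polynomial.X * ∑ j ∈ Finset.range N, Polynomial.C (φ (q j)) * Polynomial.X ^ j with hP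
  have heval : ∀ t : ℝ, P.eval t = 0 := by
    intro t
    have := congrArg φ (h t)
    simp only [map_add, map_sum, map_smul, map_zero, smul_eq_mul] at this
    simp only [hP, Polynomial.eval_add, Polynomial.eval_mul, Polynomial.eval_finset_sum,
      Polynomial.eval_mul, Polynomial.eval_C, Polynomial.eval_pow, Polynomial.eval_X]
    rw [← this]
    have e1 : ∀ f : ℕ → ℝ, ∑ x ∈ Finset.range N, f x * t ^ x
        = ∑ x ∈ Finset.range N, t ^ x * f x :=
      fun f => Finset.sum_congr rfl fun j _ => mul_comm _ _
    rw [e1 (fun x => φ (p x)), e1 (fun x => φ (q x))]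
  have hP0 : P = 0 := Polynomial.funext fun t => by rw [heval t, Polynomial.eval_zero]
  have hc := congrArg (fun Q => Polynomial.coeff Q (m + 1)) hP0
  simp only [hP, Polynomial.coeff_add, Polynomial.coeff_zero, Polynomial.coeff_X_mul,
    Polynomial.finset_sum_coeff, Polynomial.coeff_C_mul, Polynomial.coeff_X_pow,
    mul_ite, mul_one, mul_zero, Finset.sum_ite_eq (Finset.range N)] at hc
  rw [if_pos (Finset.mem_range.2 hm), if_pos (Finset.mem_range.2 (by omega : m < N))] at hc
  simpa [map_add] using hc

lemma exists_ann {V : Type*} [AddCommGroup V] [Module ℝ V] (p : Submodule ℝ V) (hp : p ≠ ⊤) :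
    ∃ ξ : Module.Dual ℝ V, ξ ≠ 0 ∧ ∀ v ∈ p, ξ v = 0 := by
  obtain ⟨v, hv⟩ : ∃ v, v ∉ p := by
    by_contra hc
    push_neg at hc
    exact hp (Submodule.eq_top_iff'.2 hc)
  have hv' : p.mkQ v ≠ 0 := by
    simpa [Submodule.Quotient.mk_eq_zero] using hv
  obtain ⟨φ, hφ⟩ : ∃ φ : Module.Dual ℝ (V ⧸ p), φ (p.mkQ v) ≠ 0 := by
    by_contra hc
    push_neg at hc
    exact hv' ((Module.forall_dual_apply_eq_zero_iff ℝ _).1 hc)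
  refine ⟨φ.comp p.mkQ, fun h0 => hφ ?_, fun w hw => ?_⟩
  · rw [← LinearMap.comp_apply, h0, LinearMap.zero_apply]
  · simp [LinearMap.comp_apply, (Submodule.Quotient.mk_eq_zero p).2 hw]

/-- a proper ideal of a Lie algebra of constant height `k` is abelian. -/
theorem proper_ideal_abelian (L : Type*) [LieRing L] [LieAlgebra ℝ L]
    [FiniteDimensional ℝ L] (I : LieIdeal ℝ L) (hI : I ≠ ⊤) (k : ℕ)
    (h : ∀ ξ : Module.Dual ℝ L, ξ ≠ 0 →
      ι ℝ ξ * (ceD L ξ) ^ k ≠ 0 ∧ ι ℝ ξ * (ceD L ξ) ^ (k + 1) = 0) :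
    IsLieAbelian ↥I := by
  constructor
  intro x y
  by_contra hne
  set X : L := (x : L) with hX
  set Y : L := (y : L) with hY
  have hZI : ⁅X, Y⁆ ∈ I := I.lie_mem y.2
  have hZ0 : ⁅X, Y⁆ ≠ 0 := by
    intro h0
    exact hne (Subtype.ext h0)
  -- a nonzero functional annihilating I
  obtain ⟨ξ, hξ0, hξI⟩ := exists_ann (I : Submodule ℝ L)
    (fun htop => hI (by rwa [LieIdeal.toLieSubalgebra_toSubmodule, LieSubmodule.toSubmodule_eq_top] at htop))
  have hξI' : ∀ v ∈ I, ξ v = 0 := fun v hv => hξI v hv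
  -- a functional not vanishing on the bracket
  obtain ⟨η, hη⟩ : ∃ η : Module.Dual ℝ L, η ⁅X, Y⁆ ≠ 0 := by
    by_contra hc
    push_neg at hc
    exact hZ0 ((Module.forall_dual_apply_eq_zero_iff ℝ _).1 hc)
  set A := ceD L ξ with hA
  set B := ceD L η with hB
  -- dForm ξ vanishes against members of I
  have hdF : ∀ W : L, W ∈ I → dForm L ξ W = 0 := by
    intro W hW
    ext V
    rw [dForm_apply, LinearMap.zero_apply]
    have hWV : ⁅W, V⁆ ∈ I := by
      rw [← lie_skew]
      exact I.neg_mem (I.lie_mem hW)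
    rw [hξI' _ hWV, neg_zero]
  -- the coefficient functions
  set s : ℕ → ExteriorAlgebra ℝ (Module.Dual ℝ L) :=
    fun m => A ^ m * B ^ (k + 1 - m) * (((k+1).choose m : ℕ) : ExteriorAlgebra ℝ (Module.Dual ℝ L))
    with hs
  have hpoly : ∀ t : ℝ, (∑ m ∈ Finset.range (k+2), t ^ m • (ι ℝ η * s m))
      + t • ∑ m ∈ Finset.range (k+2), t ^ m • (ι ℝ ξ * s m) = 0 := by
    intro t
    have hne' : t • ξ + η ≠ 0 := by
      intro h0
      have := congrArg (fun f : Module.Dual ℝ L => f ⁅X, Y⁆) h0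
      simp only [LinearMap.add_apply, LinearMap.smul_apply, smul_eq_mul,
        LinearMap.zero_apply, hξI' _ hZI, mul_zero, zero_add] at this
      exact hη this
    have h2 := (h (t • ξ + η) hne').2
    rw [map_add, map_smul, ceD_smul_add, ((ceD_comm ξ η).smul_left t).add_pow] at h2
    simp_rw [smul_pow, smul_mul_assoc] at h2
    rw [add_mul, smul_mul_assoc, Finset.mul_sum, Finset.mul_sum] at h2
    simp_rw [mul_smul_comm] at h2
    rw [add_comm] at h2
    exact h2
  have key := poly_coeff_vanish (k+2) (fun m => ι ℝ η * s m) (fun m => ι ℝ ξ * s m) hpoly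
    (m := k) (by omega)
  -- simplify s (k+1) and s k
  have hcast : ∀ n : ℕ, ((n : ℕ) : ExteriorAlgebra ℝ (Module.Dual ℝ L))
      = algebraMap ℝ _ ((n : ℕ) : ℝ) := fun n => by rw [map_natCast]
  have hs1 : s (k+1) = A ^ (k+1) := by
    rw [hs]
    simp only [Nat.choose_self, Nat.cast_one, mul_one, Nat.sub_self, pow_zero]
  have hs2 : s k = ((k+1 : ℕ) : ℝ) • (A ^ k * B) := by
    rw [hs]
    have e : k + 1 - k = 1 := by omega
    simp only [e, pow_one, Nat.choose_succ_self_right]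
    rw [hcast, mul_algebraMap_eq_smul]
  rw [hs1, hs2] at key
  set w : Module.Dual ℝ L := dForm L η X with hw
  -- contract with X
  have keyX : η X • A ^ (k+1) - ((k+1 : ℕ) : ℝ) • (ι ℝ ξ * (A ^ k * ι ℝ w)) = 0 := by
    have := congrArg (DX X) key
    rw [map_add, map_zero, DX_ι_mul, DX_ceD_pow X (hdF X x.2) (k+1)] at this
    rw [mul_zero, sub_zero, mul_smul_comm, map_smul, DX_ι_mul, hξI' X x.2, zero_smul,
      zero_sub, DX_ceD_pow_mul X (hdF X x.2) k, hB, DX_ceD, ← hw, smul_neg] at this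
    rw [← this]
    abel
  -- contract with Y
  have keyY : (((k+1 : ℕ) : ℝ) * w Y) • (ι ℝ ξ * A ^ k) = 0 := by
    have := congrArg (DX Y) keyX
    rw [map_sub, map_zero, map_smul, DX_ceD_pow Y (hdF Y y.2) (k+1), smul_zero, zero_sub,
      map_smul, DX_ι_mul, hξI' Y y.2, zero_smul, zero_sub,
      DX_ceD_pow_mul Y (hdF Y y.2) k, DX_ι, mul_algebraMap_eq_smul, mul_smul_comm] at this
    simp only [smul_neg, neg_neg, ← mul_smul] at this
    exact this
  have hwY : w Y ≠ 0 := by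
    rw [hw, dForm_apply]
    simpa using hη
  have hfac : (((k+1 : ℕ) : ℝ) * w Y) ≠ 0 :=
    mul_ne_zero (by positivity) hwY
  have := (smul_eq_zero.1 keyY).resolve_left hfac
  exact (h ξ hξ0).1 this
end

section
/- Let g be a finite-dimensional real semisimple Lie algebra such that for every nonzero ξ ∈ g* there exists no Y ∈ g with ad*_Y ξ = ξ (equivalently, the eigenvalue-1 condition [X,Y] = X with X ≠ 0 never occurs). Suppose g admits a Cartan involution with Cartan decomposition g = k ⊕ p. Then p = 0, i.e., g is a compact Lie algebra (its Killing form is negative definite). -/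
/-- a real semisimple Lie algebra in which no nonzero `X` satisfies
`[X,Y] = X` for some `Y` (equivalently, `ad*_Y ξ = ξ` never holds for `ξ ≠ 0`),
admitting a Cartan involution `θ` (an involutive Lie algebra automorphism for which
`B_θ(X,Y) = -B(X, θY)` is positive definite, `B` the Killing form), is compact:
the `-1` eigenspace `p` vanishes and the Killing form is negative definite. -/
theorem semisimple_no_eigenvalue_one_compact (L : Type*) [LieRing L] [LieAlgebra ℝ L]
    [FiniteDimensional ℝ L] [LieAlgebra.IsSemisimple ℝ L]
    (θ : L →ₗ⁅ℝ⁆ L) (hinv : ∀ x : L, θ (θ x) = x)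
    (hpos : ∀ x : L, x ≠ 0 → 0 < -(killingForm ℝ L x (θ x)))
    (hno : ∀ x : L, x ≠ 0 → ∀ y : L, ⁅x, y⁆ ≠ x) :
    (∀ x : L, θ x = -x → x = 0) ∧ (∀ x : L, x ≠ 0 → killingForm ℝ L x x < 0) := by
  have hBsymm : ∀ x y : L, killingForm ℝ L x y = killingForm ℝ L y x :=
    fun x y => LieModule.traceForm_comm ℝ L L x y
  let e : L ≃ₗ⁅ℝ⁆ L := { θ with invFun := θ, left_inv := hinv, right_inv := hinv }
  have hθB : ∀ x y : L, killingForm ℝ L (θ x) (θ y) = killingForm ℝ L x y :=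
    fun x y => LieAlgebra.killingForm_of_equiv_apply e x y
  have hswap : ∀ x y : L, killingForm ℝ L x (θ y) = killingForm ℝ L (θ x) y := by
    intro x y
    calc killingForm ℝ L x (θ y) = killingForm ℝ L (θ (θ x)) (θ y) := by rw [hinv]
    _ = killingForm ℝ L (θ x) y := hθB _ _
  have hp : ∀ Y : L, θ Y = -Y → Y = 0 := by
    intro Y hY
    by_contra hY0
    let cd : InnerProductSpace.Core ℝ L :=
      { inner := fun x y => -(killingForm ℝ L x (θ y))
        conj_inner_symm := by
          intro x y
          show -(killingForm ℝ L y (θ x)) = -(killingForm ℝ L x (θ y))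
          rw [hswap x y, hBsymm]
        re_inner_nonneg := by
          intro x
          rcases eq_or_ne x 0 with h | h
          · simp [h]
          · exact le_of_lt (by simpa using hpos x h)
        add_left := by
          intro x y z
          show -(killingForm ℝ L (x + y) (θ z)) =
            -(killingForm ℝ L x (θ z)) + -(killingForm ℝ L y (θ z))
          simp only [map_add, LinearMap.add_apply]
          ring
        smul_left := by
          intro x y r
          show -(killingForm ℝ L (r • x) (θ y)) =
            (starRingEnd ℝ) r * -(killingForm ℝ L x (θ y))
          simp only [map_smul, LinearMap.smul_apply, smul_eq_mul, starRingEnd_apply,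
            star_trivial]
          ring
        definite := by
          intro x hx
          by_contra h
          exact (hpos x h).ne' hx }
    letI : NormedAddCommGroup L := cd.toNormedAddCommGroup
    letI : InnerProductSpace ℝ L := InnerProductSpace.ofCore cd.toCore
    set T : Module.End ℝ L := LieAlgebra.ad ℝ L Y with hT
    have hLie : ∀ x : L, T x = ⁅Y, x⁆ := fun x => rfl
    have hsym : T.IsSymmetric := by
      intro x y
      show -(killingForm ℝ L (T x) (θ y)) = -(killingForm ℝ L x (θ (T y)))
      have h1 : θ (T y) = -⁅Y, θ y⁆ := by
        rw [hLie, LieHom.map_lie, hY, neg_lie]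
      rw [h1, map_neg, neg_neg, hLie]
      -- goal : -(killingForm ℝ L ⁅Y, x⁆ (θ y)) = killingForm ℝ L x ⁅Y, θ y⁆
      have h2 : killingForm ℝ L x ⁅Y, θ y⁆ = killingForm ℝ L ⁅x, Y⁆ (θ y) :=
        (LieModule.traceForm_apply_lie_apply ℝ L L x Y (θ y)).symm
      rw [h2, ← lie_skew Y x, map_neg, LinearMap.neg_apply, neg_neg]
    -- if all eigenvalues are zero, T = 0
    have htop : (⨆ μ, Module.End.eigenspace T μ) = ⊤ := by
      rw [← Submodule.orthogonal_eq_bot_iff]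
      exact hsym.orthogonalComplement_iSup_eigenspaces_eq_bot
    by_cases hzero : ∀ μ : ℝ, μ ≠ 0 → Module.End.eigenspace T μ = ⊥
    · have hker : (⨆ μ, Module.End.eigenspace T μ) ≤ LinearMap.ker T := by
        apply iSup_le
        intro μ
        rcases eq_or_ne μ 0 with h | h
        · rw [h, Module.End.eigenspace_zero]
        · rw [hzero μ h]; exact bot_le
      have hT0 : ∀ x : L, T x = 0 := by
        intro x
        have : x ∈ LinearMap.ker T := hker (htop ▸ Submodule.mem_top)
        exact this
      have hzero' : killingForm ℝ L Y (θ Y) = 0 := by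
        rw [killingForm_apply_apply]
        have had : LieAlgebra.ad ℝ L Y = 0 := by
          ext x; exact hT0 x
        rw [had, LinearMap.zero_comp, map_zero]
      have hlt := hpos Y hY0
      rw [hzero'] at hlt
      simp at hlt
    · push_neg at hzero
      obtain ⟨μ, hμ0, hμ⟩ := hzero
      obtain ⟨X, hXmem, hX0⟩ := (Submodule.ne_bot_iff _).mp hμ
      have hXe : ⁅Y, X⁆ = μ • X := by
        rw [← hLie]; exact Module.End.mem_eigenspace_iff.mp hXmem
      refine hno X hX0 ((-μ⁻¹) • Y) ?_
      rw [lie_smul, ← lie_skew X Y, hXe, smul_neg, smul_smul, neg_mul,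
        inv_mul_cancel₀ hμ0, neg_smul, one_smul, neg_neg]
  refine ⟨hp, ?_⟩
  have hfix : ∀ x : L, θ x = x := by
    intro x
    have h : θ (x - θ x) = -(x - θ x) := by
      rw [map_sub, hinv, neg_sub]
    have := hp _ h
    rw [sub_eq_zero] at this
    exact this.symm
  intro x hx
  have := hpos x hx
  rw [hfix] at this
  linarith
end

section
/- Let g be a finite-dimensional real Lie algebra with a codimension-one abelian ideal h, so that g = ℝX ⊕ h with bracket determined by A := ad_X|_h : h → h. If g has constant height 0 (i.e., θ ∧ d_g θ = 0 for all θ ∈ g*), then A = λ·id_h for some λ ∈ ℝ. Consequently g is abelian (if λ = 0) or isomorphic to the semidirect product ℝ ⋉ ℝⁿ for the diagonal representation (if λ ≠ 0). -/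
open ExteriorAlgebra Module

/-- The semidirect product `ℝ ⋉ ℝⁿ` for the diagonal representation of `ℝ` on `ℝⁿ`,
with bracket `[(s,v),(t,w)] = (0, s•w - t•v)`. -/
def DiagSD (n : ℕ) : Type := ℝ × (Fin n → ℝ)

instance (n : ℕ) : AddCommGroup (DiagSD n) :=
  inferInstanceAs (AddCommGroup (ℝ × (Fin n → ℝ)))

noncomputable instance (n : ℕ) : Module ℝ (DiagSD n) :=
  inferInstanceAs (Module ℝ (ℝ × (Fin n → ℝ)))

instance (n : ℕ) : LieRing (DiagSD n) where
  bracket x y := ((0 : ℝ), x.1 • y.2 - y.1 • x.2)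
  add_lie x y z := by
    show ((0 : ℝ), (x.1 + y.1) • z.2 - z.1 • (x.2 + y.2)) =
      (((0 : ℝ), x.1 • z.2 - z.1 • x.2) + ((0 : ℝ), y.1 • z.2 - z.1 • y.2) :
        ℝ × (Fin n → ℝ))
    simp [Prod.ext_iff, add_smul, smul_add]
    module
  lie_add x y z := by
    show ((0 : ℝ), x.1 • (y.2 + z.2) - (y.1 + z.1) • x.2) =
      (((0 : ℝ), x.1 • y.2 - y.1 • x.2) + ((0 : ℝ), x.1 • z.2 - z.1 • x.2) :
        ℝ × (Fin n → ℝ))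
    simp [Prod.ext_iff, add_smul, smul_add]
    module
  lie_self x := by
    show ((0 : ℝ), x.1 • x.2 - x.1 • x.2) = (0 : ℝ × (Fin n → ℝ))
    simp [Prod.ext_iff]
  leibniz_lie x y z := by
    show ((0 : ℝ), x.1 • (y.1 • z.2 - z.1 • y.2) - (0 : ℝ) • x.2) =
      (((0 : ℝ), (0 : ℝ) • z.2 - z.1 • (x.1 • y.2 - y.1 • x.2)) +
        ((0 : ℝ), y.1 • (x.1 • z.2 - z.1 • x.2) - (0 : ℝ) • y.2) : ℝ × (Fin n → ℝ))
    simp [Prod.ext_iff, smul_sub, smul_smul]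
    module

noncomputable instance (n : ℕ) : LieAlgebra ℝ (DiagSD n) where
  lie_smul t x y := by
    show ((0 : ℝ), x.1 • (t • y.2) - (t • y.1) • x.2) =
      (t • (((0 : ℝ), x.1 • y.2 - y.1 • x.2) : ℝ × (Fin n → ℝ)))
    simp [Prod.ext_iff, smul_sub, smul_smul]
    module


section Aux

variable {L : Type*} [LieRing L] [LieAlgebra ℝ L] [FiniteDimensional ℝ L]

noncomputable def tripAux (u v w : L) : (Module.Dual ℝ L) [⋀^Fin 3]→ₗ[ℝ] ℝ :=
  (Matrix.detRowAlternating).compLinearMap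
    (LinearMap.pi fun k : Fin 3 => Module.Dual.eval ℝ L (![u, v, w] k))

noncomputable def trip (u v w : L) : ExteriorAlgebra ℝ (Module.Dual ℝ L) →ₗ[ℝ] ℝ :=
  ExteriorAlgebra.liftAlternating (fun i => match i with
    | 3 => tripAux u v w
    | _ => 0)

omit [FiniteDimensional ℝ L] in
theorem tripAux_apply (u v w : L) (a b c : Module.Dual ℝ L) :
    tripAux u v w ![a, b, c] =
      a u * (b v * c w) - a u * (b w * c v) - a v * (b u * c w)
        + a v * (b w * c u) + a w * (b u * c v) - a w * (b v * c u) := by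
  have h : ∀ N : Fin 3 → Fin 3 → ℝ, Matrix.detRowAlternating N = Matrix.det (Matrix.of N) :=
    fun _ => rfl
  rw [tripAux, AlternatingMap.compLinearMap_apply, h, Matrix.det_fin_three]
  simp [Matrix.of_apply]
  ring

omit [FiniteDimensional ℝ L] in
theorem trip_mul (u v w : L) (a b c : Module.Dual ℝ L) :
    trip u v w (ι ℝ a * (ι ℝ b * ι ℝ c)) =
      a u * (b v * c w) - a u * (b w * c v) - a v * (b u * c w)
        + a v * (b w * c u) + a w * (b u * c v) - a w * (b v * c u) := by
  rw [trip, liftAlternating_ι_mul, liftAlternating_ι_mul, liftAlternating_ι]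
  show ((tripAux u v w).curryLeft a).curryLeft b ![c] = _
  rw [AlternatingMap.curryLeft_apply_apply, AlternatingMap.curryLeft_apply_apply]
  rw [show (Matrix.vecCons a (Matrix.vecCons b ![c])) = ![a,b,c] from rfl]
  exact tripAux_apply u v w a b c

noncomputable def brkt (θ : Module.Dual ℝ L) : L →ₗ[ℝ] L →ₗ[ℝ] ℝ :=
  LinearMap.mk₂ ℝ (fun x y => θ ⁅x, y⁆)
    (fun x x' y => by simp [add_lie])
    (fun c x y => by simp [smul_lie])
    (fun x y y' => by simp [lie_add])
    (fun c x y => by simp [lie_smul])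

omit [FiniteDimensional ℝ L] in
theorem key_sum {κ : Type*} [Fintype κ] (b : Basis κ ℝ L) (θ : Module.Dual ℝ L) (x y : L) :
    ∑ i, b.coord i x * ∑ j, b.coord j y * θ ⁅b i, b j⁆ = θ ⁅x, y⁆ := by
  simp only [Finset.mul_sum]
  have hx := b.sum_repr x
  have hy := b.sum_repr y
  calc ∑ i, ∑ j, b.coord i x * (b.coord j y * θ ⁅b i, b j⁆)
      = ∑ i, ∑ j, (b.repr x i) • ((b.repr y j) • brkt θ (b i) (b j)) := by
        simp [brkt, Basis.coord_apply, smul_eq_mul]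
    _ = brkt θ x y := by
        conv_rhs => rw [← hx, ← hy]
        simp only [map_sum, map_smul, LinearMap.sum_apply, LinearMap.smul_apply,
          Finset.smul_sum, smul_eq_mul]
        rw [Finset.sum_comm]
        simp only [Finset.mul_sum]
        exact Finset.sum_congr rfl fun i _ => Finset.sum_congr rfl fun j _ => by ring
    _ = θ ⁅x, y⁆ := rfl

set_option synthInstance.maxHeartbeats 1000000 in
set_option maxHeartbeats 2000000 in
theorem cocycle (hheight : ∀ θ : Module.Dual ℝ L, θ ≠ 0 →
      ι ℝ θ ≠ 0 ∧ ι ℝ θ * ceD L θ = 0)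
    (θ : Module.Dual ℝ L) (u v w : L) :
    θ u * θ ⁅v, w⁆ - θ v * θ ⁅u, w⁆ + θ w * θ ⁅u, v⁆ = 0 := by
  rcases eq_or_ne θ 0 with rfl | hθ
  · simp
  set bb := Module.Free.chooseBasis ℝ L with hbb
  have hexp : ι ℝ θ * ceD L θ = (-(1:ℝ)/2) • ∑ i, ∑ j, θ ⁅bb i, bb j⁆ •
      (ι ℝ θ * (ι ℝ (bb.coord i) * ι ℝ (bb.coord j))) := by
    rw [ceD]
    rw [mul_smul_comm, Finset.mul_sum]
    congr 1
    refine Finset.sum_congr rfl fun i _ => ?_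
    rw [Finset.mul_sum]
    exact Finset.sum_congr rfl fun j _ => mul_smul_comm _ _ _
  have h0 : trip u v w (ι ℝ θ * ceD L θ) = 0 := by rw [(hheight θ hθ).2, map_zero]
  rw [hexp, map_smul, map_sum] at h0
  simp only [map_sum, map_smul, trip_mul, smul_eq_mul] at h0
  have hS : ∑ i, ∑ j, θ ⁅bb i, bb j⁆ *
      (θ u * (bb.coord i v * bb.coord j w) - θ u * (bb.coord i w * bb.coord j v)
        - θ v * (bb.coord i u * bb.coord j w) + θ v * (bb.coord i w * bb.coord j u)
        + θ w * (bb.coord i u * bb.coord j v) - θ w * (bb.coord i v * bb.coord j u)) =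
      2 * (θ u * θ ⁅v, w⁆ - θ v * θ ⁅u, w⁆ + θ w * θ ⁅u, v⁆) := by
    have hrw : ∀ i j, θ ⁅bb i, bb j⁆ *
        (θ u * (bb.coord i v * bb.coord j w) - θ u * (bb.coord i w * bb.coord j v)
          - θ v * (bb.coord i u * bb.coord j w) + θ v * (bb.coord i w * bb.coord j u)
          + θ w * (bb.coord i u * bb.coord j v) - θ w * (bb.coord i v * bb.coord j u)) =
        θ u * (bb.coord i v * (bb.coord j w * θ ⁅bb i, bb j⁆))
        - θ u * (bb.coord i w * (bb.coord j v * θ ⁅bb i, bb j⁆))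
        - θ v * (bb.coord i u * (bb.coord j w * θ ⁅bb i, bb j⁆))
        + θ v * (bb.coord i w * (bb.coord j u * θ ⁅bb i, bb j⁆))
        + θ w * (bb.coord i u * (bb.coord j v * θ ⁅bb i, bb j⁆))
        - θ w * (bb.coord i v * (bb.coord j u * θ ⁅bb i, bb j⁆)) := fun i j => by ring
    simp only [hrw, Finset.sum_sub_distrib, Finset.sum_add_distrib, ← Finset.mul_sum]
    rw [key_sum bb θ v w, key_sum bb θ w v, key_sum bb θ u w, key_sum bb θ w u,
      key_sum bb θ u v, key_sum bb θ v u]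
    rw [← lie_skew v w, ← lie_skew u w, ← lie_skew u v, map_neg, map_neg, map_neg]
    ring
  rw [hS] at h0
  linarith

end Aux

set_option synthInstance.maxHeartbeats 1000000 in
/-- let `g` have a codimension-one abelian ideal `h`, `g = ℝX ⊕ h`, with
`A = ad_X|_h`.  If `g` has constant height `0`, then `A = λ·id` for some `λ ∈ ℝ`, and
consequently `g` is abelian (if `λ = 0`) or isomorphic to the semidirect product
`ℝ ⋉ ℝⁿ` for the diagonal representation (if `λ ≠ 0`). -/
theorem constant_height_zero_classification (L : Type*) [LieRing L] [LieAlgebra ℝ L]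
    [FiniteDimensional ℝ L] (H : LieIdeal ℝ L) (hab : IsLieAbelian ↥H)
    (X : L) (hX : X ∉ H)
    (hsum : Submodule.span ℝ {X} ⊔ H.toSubmodule = ⊤)
    (hheight : ∀ θ : Module.Dual ℝ L, θ ≠ 0 →
      ι ℝ θ ≠ 0 ∧ ι ℝ θ * ceD L θ = 0) :
    ∃ lam : ℝ, (∀ v ∈ H, ⁅X, v⁆ = lam • v) ∧
      (lam = 0 → IsLieAbelian L) ∧
      (lam ≠ 0 → Nonempty (L ≃ₗ⁅ℝ⁆ DiagSD (Module.finrank ℝ ↥H))) := by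
  -- brackets inside H vanish
  have hHab : ∀ v ∈ H, ∀ w ∈ H, ⁅v, w⁆ = (0 : L) := by
    intro v hv w hw
    have h1 : (⁅(⟨v, hv⟩ : H), (⟨w, hw⟩ : H)⁆ : H) = 0 := trivial_lie_zero _ _ _ _
    exact congrArg Subtype.val h1
  -- the cocycle identity
  have hco := cocycle hheight
  -- the key relation on H
  have hrel : ∀ θ : Module.Dual ℝ L, ∀ v ∈ H, ∀ w ∈ H,
      θ w * θ ⁅X, v⁆ = θ v * θ ⁅X, w⁆ := by
    intro θ v hv w hw
    have h := hco θ X v w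
    rw [hHab v hv w hw, map_zero, mul_zero] at h
    linarith
  -- every v in H is an eigenvector
  have heig : ∀ v ∈ H, ∃ c : ℝ, ⁅X, v⁆ = c • v := by
    intro v hv
    have hmem : ⁅X, v⁆ ∈ Submodule.span ℝ {v} := by
      by_contra hns
      set p := Submodule.span ℝ {v} with hp
      obtain ⟨φ, hφ⟩ : ∃ φ : Module.Dual ℝ (L ⧸ p), φ (p.mkQ ⁅X, v⁆) ≠ 0 := by
        by_contra hall
        push_neg at hall
        have hz : p.mkQ ⁅X, v⁆ = 0 := (Module.forall_dual_apply_eq_zero_iff ℝ _).mp hall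
        rw [Submodule.mkQ_apply, Submodule.Quotient.mk_eq_zero] at hz
        exact hns hz
      set θ : Module.Dual ℝ L := φ.comp p.mkQ with hθ
      have hθv : θ v = 0 := by
        have : p.mkQ v = 0 := by
          rw [Submodule.mkQ_apply, Submodule.Quotient.mk_eq_zero]
          exact Submodule.mem_span_singleton_self v
        simp [hθ, this]
      have hAv : ⁅X, v⁆ ∈ H := H.lie_mem hv
      have h := hrel θ v hv ⁅X, v⁆ hAv
      rw [hθv, zero_mul] at h
      exact hφ (mul_self_eq_zero.mp h)
    obtain ⟨c, hc⟩ := Submodule.mem_span_singleton.mp hmem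
    exact ⟨c, hc.symm⟩
  -- decomposition of arbitrary elements
  have hdec : ∀ y : L, ∃ s : ℝ, ∃ v, v ∈ H ∧ y = s • X + v := by
    intro y
    have hy : y ∈ (⊤ : Submodule ℝ L) := trivial
    rw [← hsum] at hy
    obtain ⟨a, ha, b, hb, hab'⟩ := Submodule.mem_sup.mp hy
    obtain ⟨s, rfl⟩ := Submodule.mem_span_singleton.mp ha
    exact ⟨s, b, hb, hab'.symm⟩
  -- bracket formula
  have hbr : ∀ (s t : ℝ) (v w : L), v ∈ H → w ∈ H →
      ⁅s • X + v, t • X + w⁆ = s • ⁅X, w⁆ - t • ⁅X, v⁆ := by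
    intro s t v w hv hw
    rw [lie_add, add_lie, add_lie, smul_lie, lie_smul, smul_lie, lie_smul, lie_self,
      hHab v hv w hw, ← lie_skew X v]
    simp only [smul_zero, zero_add, add_zero, smul_neg]
    abel
  by_cases hHbot : ∀ v ∈ H, v = (0 : L)
  · refine ⟨0, fun v hv => by rw [hHbot v hv]; simp, fun _ => ?_, fun h0 => absurd rfl h0⟩
    constructor
    intro x y
    obtain ⟨s, v, hv, rfl⟩ := hdec x
    obtain ⟨t, w, hw, rfl⟩ := hdec y
    rw [hbr s t v w hv hw, hHbot v hv, hHbot w hw]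
    simp
  · push_neg at hHbot
    obtain ⟨v₀, hv₀H, hv₀⟩ := hHbot
    obtain ⟨lam, hlam⟩ := heig v₀ hv₀H
    have hmain : ∀ v ∈ H, ⁅X, v⁆ = lam • v := by
      intro v hv
      obtain ⟨c, hc⟩ := heig v hv
      obtain ⟨c', hc'⟩ := heig (v + v₀) (H.add_mem hv hv₀H)
      have he : c • v + lam • v₀ = c' • v + c' • v₀ := by
        rw [lie_add, hc, hlam] at hc'
        rw [hc', smul_add]
      by_cases hcc : c = c'
      · subst hcc
        have h2 : lam • v₀ = c • v₀ := by
          have := add_left_cancel he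
          exact this
        have h3 : (lam - c) • v₀ = 0 := by rw [sub_smul, h2, sub_self]
        have h4 : lam = c := by
          rcases smul_eq_zero.mp h3 with h | h
          · linarith [sub_eq_zero.mp (by linarith [h] : lam - c = 0)]
          · exact absurd h hv₀
        rw [hc, h4]
      · have h2 : (c - c') • v = (c' - lam) • v₀ := by
          rw [sub_smul, sub_smul, sub_eq_sub_iff_add_eq_add]
          rw [he]; abel
        have hveq : v = ((c - c')⁻¹ * (c' - lam)) • v₀ := by
          rw [mul_smul, ← h2, inv_smul_smul₀ (sub_ne_zero.mpr hcc)]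
        rw [hveq, lie_smul, hlam, smul_smul, smul_smul, mul_comm]
    refine ⟨lam, hmain, fun h0 => ?_, fun hne => ?_⟩
    · constructor
      intro x y
      obtain ⟨s, v, hv, rfl⟩ := hdec x
      obtain ⟨t, w, hw, rfl⟩ := hdec y
      rw [hbr s t v w hv hw, hmain v hv, hmain w hw, h0]
      simp
    · -- construct the isomorphism
      have hX0 : X ≠ 0 := fun h => hX (h ▸ H.zero_mem)
      have hdisj : Disjoint (Submodule.span ℝ {X}) H.toSubmodule :=
        ((Submodule.disjoint_span_singleton' hX0).mpr hX).symm
      have hcompl : IsCompl (Submodule.span ℝ {X}) H.toSubmodule :=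
        ⟨hdisj, codisjoint_iff.mpr hsum⟩
      set n := Module.finrank ℝ ↥H with hn
      set bH : Basis (Fin n) ℝ ↥H := Module.finBasis ℝ ↥H with hbH
      set e2 := LinearEquiv.toSpanNonzeroSingleton ℝ L X hX0 with he2
      set esc : ℝ ≃ₗ[ℝ] ℝ := LinearEquiv.smulOfNeZero ℝ ℝ lam hne with hesc
      set e : L ≃ₗ[ℝ] ℝ × (Fin n → ℝ) :=
        (Submodule.prodEquivOfIsCompl _ _ hcompl).symm.trans
          ((e2.symm.trans esc).prodCongr bH.equivFun) with hee
      have heval : ∀ (s : ℝ) (v : L) (hv : v ∈ H),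
          e (s • X + v) = (lam * s, bH.equivFun ⟨v, hv⟩) := by
        intro s v hv
        have hmemX : s • X ∈ Submodule.span ℝ {X} :=
          Submodule.smul_mem _ s (Submodule.mem_span_singleton_self X)
        have h1 : (Submodule.prodEquivOfIsCompl _ _ hcompl).symm (s • X + v) =
            (⟨s • X, hmemX⟩, ⟨v, hv⟩) := by
          rw [LinearEquiv.symm_apply_eq]
          rfl
        have h2 : e2.symm ⟨s • X, hmemX⟩ = s := by
          rw [LinearEquiv.symm_apply_eq]
          apply Subtype.ext
          simp [he2]
        rw [hee, LinearEquiv.trans_apply, h1]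
        show ((e2.symm.trans esc) ⟨s • X, hmemX⟩, bH.equivFun ⟨v, hv⟩) = _
        rw [LinearEquiv.trans_apply, h2]
        have : esc s = lam * s := rfl
        rw [this]
      have hlie : ∀ x y : L,
          e ⁅x, y⁆ = ((0 : ℝ), (e x).1 • (e y).2 - (e y).1 • (e x).2) := by
        intro x y
        obtain ⟨s, v, hv, rfl⟩ := hdec x
        obtain ⟨t, w, hw, rfl⟩ := hdec y
        have hbxy : ⁅s • X + v, t • X + w⁆ =
            (0 : ℝ) • X + ((s * lam) • w - (t * lam) • v) := by
          rw [hbr s t v w hv hw, hmain v hv, hmain w hw]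
          rw [zero_smul, zero_add, smul_smul, smul_smul]
        have hmem : (s * lam) • w - (t * lam) • v ∈ H :=
          H.sub_mem (H.smul_mem _ hw) (H.smul_mem _ hv)
        rw [hbxy, heval 0 _ hmem, heval s v hv, heval t w hw]
        have hsub : (⟨(s * lam) • w - (t * lam) • v, hmem⟩ : H) =
            (s * lam) • (⟨w, hw⟩ : H) - (t * lam) • (⟨v, hv⟩ : H) := rfl
        rw [hsub, map_sub, map_smul, map_smul]
        refine Prod.ext (by simp) ?_
        show (s * lam) • bH.equivFun ⟨w, hw⟩ - (t * lam) • bH.equivFun ⟨v, hv⟩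
          = (lam * s) • bH.equivFun ⟨w, hw⟩ - (lam * t) • bH.equivFun ⟨v, hv⟩
        rw [mul_comm lam s, mul_comm lam t]
      exact ⟨{ e with map_lie' := fun {x y} => hlie x y }⟩
end
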